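/- Let C be a simplicial complex of dimension d on a finite vertex set V with |V| = n, with f-vector (f_{−1}, f₀, …, f_d) and h-vector (h₀, …, h_{d+1}) defined by h_k = Σ_{i=0}^{k} (−1)^{k−i} C(d+1−i, k−i) f_{i−1}. Then (1/(n+1)) · Σ_{W ⊆ V} χ̃(C[W])/C(n,|W|) = Σ_{k=0}^{d+1} (−1)^{k+1} h_k/((d+2)·C(d+1, k)); equivalently, Σ_{i=−1}^{d} (−1)^i τ_i(C) = Σ_{k=0}^{d+1} (−1)^{k+1} h_k/((d+2)·C(d+1, k)). -/

import Mathlib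

/-!
Both sides reduce to the identity `∑_{k=i}^{N} C(N-i, k-i) / C(N, k) = (N+1)/(i+1)`, which follows
from `C(N-i, k-i) / C(N, k) = C(k, i) / C(N, i)` and the hockey-stick identity. On the left, swapping
the order of summation and grouping the supersets `W ⊇ F` by size, a face `F` contributes
`(-1)^(|F|+1) (n+1)/(|F|+1)`, so the left side is `∑_i (-1)^(i+1) f_{i-1} / (i+1)`. On the right,
expanding the `h`-vector and swapping sums gives the same expression.
-/

open Finset

theorem sum_Icc_choose_sub_div_choose {n i : ℕ} (hi : i ≤ n) :
    ∑ k ∈ Icc i n, ((n - i).choose (k - i) : ℚ) / n.choose k = (n + 1) / (i + 1) := by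
  have hni : (n.choose i : ℚ) ≠ 0 := by exact_mod_cast (Nat.choose_pos hi).ne'
  have hterm : ∀ k ∈ Icc i n,
      ((n - i).choose (k - i) : ℚ) / n.choose k = (k.choose i : ℚ) / n.choose i := by
    intro k hk
    obtain ⟨hik, hkn⟩ := mem_Icc.1 hk
    have hnk : (n.choose k : ℚ) ≠ 0 := by exact_mod_cast (Nat.choose_pos hkn).ne'
    rw [div_eq_div_iff hnk hni]
    have := congrArg (Nat.cast (R := ℚ)) (Nat.choose_mul (n := n) hik)
    push_cast at this
    linarith
  have hsucc := congrArg (Nat.cast (R := ℚ)) (Nat.add_one_mul_choose_eq n i)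
  push_cast at hsucc
  rw [sum_congr rfl hterm, ← sum_div, ← Nat.cast_sum, Nat.sum_Icc_choose,
    div_eq_div_iff hni (by positivity)]
  linarith

theorem sum_superset_inv_choose_card {α : Type*} [Fintype α] [DecidableEq α] (F : Finset α) :
    ∑ W with F ⊆ W, ((Fintype.card α).choose #W : ℚ)⁻¹ = (Fintype.card α + 1) / (#F + 1) := by
  rw [← sum_fiberwise_of_maps_to (t := Icc #F (Fintype.card α)) (g := card)
    fun W hW => mem_Icc.2 ⟨card_le_card (mem_filter.1 hW).2, card_le_univ W⟩,
    ← sum_Icc_choose_sub_div_choose F.card_le_univ]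
  refine sum_congr rfl fun k hk => ?_
  have hfiber : ((univ.filter (F ⊆ ·)).filter fun W => #W = k) =
      (powersetCard k univ).filter (F ⊆ ·) := by
    ext W; simp [and_comm]
  rw [sum_congr rfl fun W hW => by rw [(mem_filter.1 hW).2], sum_const, hfiber,
    card_filter_powersetCard_subset F univ k (subset_univ F) (mem_Icc.1 hk).1, card_univ,
    nsmul_eq_mul, div_eq_mul_inv]

theorem sum_div_choose_sum_subset {α : Type*} [Fintype α] [DecidableEq α]
    (K : Finset (Finset α)) (g : Finset α → ℚ) :
    ∑ W : Finset α, (∑ F ∈ K with F ⊆ W, g F) / (Fintype.card α).choose #W =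
      (Fintype.card α + 1) * ∑ F ∈ K, g F / (#F + 1) := by
  simp_rw [sum_div, sum_filter]
  rw [sum_comm, mul_sum]
  refine sum_congr rfl fun F _ => ?_
  rw [← sum_filter, mul_div_left_comm, ← sum_superset_inv_choose_card, mul_sum]
  simp only [div_eq_mul_inv]

theorem sum_eq_sum_range_card_filter {α : Type*} (K : Finset (Finset α)) (φ : ℕ → ℚ) {D : ℕ}
    (hD : ∀ F ∈ K, #F < D) :
    ∑ F ∈ K, φ #F = ∑ i ∈ range D, #(K.filter fun F => #F = i) * φ i := by
  rw [← sum_fiberwise_of_maps_to (t := range D) (g := card) fun F hF => mem_range.2 (hD F hF)]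
  refine sum_congr rfl fun i _ => ?_
  rw [sum_congr rfl fun F hF => by rw [(mem_filter.1 hF).2], sum_const, nsmul_eq_mul]

theorem neg_one_pow_succ_mul_neg_one_pow_sub {i m : ℕ} (him : i ≤ m) :
    (-1 : ℚ) ^ (m + 1) * (-1) ^ (m - i) = (-1) ^ (i + 1) := by
  rw [show m + 1 = i + 1 + (m - i) by omega, pow_add, mul_assoc, ← mul_pow]
  simp

theorem sum_range_hVector_div_choose (D : ℕ) (f : ℕ → ℚ) :
    ∑ m ∈ range (D + 1), (-1 : ℚ) ^ (m + 1) *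
        (∑ i ∈ range (m + 1), (-1 : ℚ) ^ (m - i) * ((D - i).choose (m - i) : ℚ) * f i) /
          ((D + 1) * D.choose m) =
      ∑ i ∈ range (D + 1), (-1 : ℚ) ^ (i + 1) * f i / (i + 1) := by
  simp_rw [mul_sum, sum_div, range_eq_Ico]
  rw [← sum_Ico_Ico_comm]
  refine sum_congr rfl fun i hi => ?_
  have hiD : i ≤ D := Nat.lt_succ_iff.1 (mem_Ico.1 hi).2
  have hterm : ∀ m ∈ Ico i (D + 1), (-1 : ℚ) ^ (m + 1) *
      ((-1 : ℚ) ^ (m - i) * ((D - i).choose (m - i) : ℚ) * f i) / ((D + 1) * D.choose m) =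
      (-1) ^ (i + 1) * f i / (D + 1) * (((D - i).choose (m - i) : ℚ) / D.choose m) := by
    intro m hm
    rw [← neg_one_pow_succ_mul_neg_one_pow_sub (mem_Ico.1 hm).1, div_eq_mul_inv, mul_inv]
    ring
  rw [sum_congr rfl hterm, ← mul_sum, Finset.Ico_add_one_right_eq_Icc,
    sum_Icc_choose_sub_div_choose hiD]
  field_simp

theorem tau_alternating_sum_hvector_general {α : Type*} [Fintype α] [DecidableEq α] (d : ℕ)
    (K : Finset (Finset α))
    (hdim : ∀ F ∈ K, F.card ≤ d + 1)
    (h : ℕ → ℚ)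
    (hh : ∀ m, h m = ∑ i ∈ Finset.range (m + 1),
      (-1 : ℚ) ^ (m - i) * ((d + 1 - i).choose (m - i) : ℚ) *
        ((K.filter fun F => F.card = i).card : ℚ)) :
    ((Fintype.card α : ℚ) + 1)⁻¹ *
        ∑ W : Finset α,
          (∑ F ∈ K.filter (fun F => F ⊆ W), (-1 : ℚ) ^ (F.card + 1)) /
            ((Fintype.card α).choose W.card : ℚ)
      = ∑ m ∈ Finset.range (d + 2),
          (-1 : ℚ) ^ (m + 1) * h m / (((d : ℚ) + 2) * ((d + 1).choose m : ℚ)) := by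
  rw [sum_div_choose_sum_subset, inv_mul_cancel_left₀ (by positivity),
    sum_eq_sum_range_card_filter K (fun i => (-1 : ℚ) ^ (i + 1) / (i + 1))
      fun F hF => Nat.lt_succ_of_le (hdim F hF)]
  simp only [hh, show (d : ℚ) + 2 = ((d + 1 : ℕ) : ℚ) + 1 by push_cast; ring]
  rw [sum_range_hVector_div_choose]
  exact sum_congr rfl fun i _ => by ring

/-- for a simplicial complex `C` of dimension `d` on a finite vertex set `V`
with `|V| = n` and `h`-vector `h_k = Σ_{i=0}^{k} (−1)^{k−i} C(d+1−i, k−i) f_{i−1}`,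
`(1/(n+1)) · Σ_{W ⊆ V} χ̃(C[W])/C(n,|W|) = Σ_{k=0}^{d+1} (−1)^{k+1} h_k/((d+2)·C(d+1,k))`,
where `χ̃` is the reduced Euler characteristic (a face `F` contributes `(−1)^{|F|−1}`) and
`f_{i−1}` is the number of faces of size `i`. -/
theorem tau_alternating_sum_hvector {α : Type*} [Fintype α] [DecidableEq α] (d : ℕ)
    (K : Finset (Finset α))
    (hclosed : ∀ F ∈ K, ∀ F' ⊆ F, F' ∈ K)
    (hempty : (∅ : Finset α) ∈ K)
    (hvert : ∀ v : α, {v} ∈ K)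
    (hdim : ∀ F ∈ K, F.card ≤ d + 1)
    (hdim' : ∃ F ∈ K, F.card = d + 1)
    (h : ℕ → ℚ)
    (hh : ∀ m, h m = ∑ i ∈ Finset.range (m + 1),
      (-1 : ℚ) ^ (m - i) * ((d + 1 - i).choose (m - i) : ℚ) *
        ((K.filter fun F => F.card = i).card : ℚ)) :
    ((Fintype.card α : ℚ) + 1)⁻¹ *
        ∑ W : Finset α,
          (∑ F ∈ K.filter (fun F => F ⊆ W), (-1 : ℚ) ^ (F.card + 1)) /
            ((Fintype.card α).choose W.card : ℚ)
      = ∑ m ∈ Finset.range (d + 2),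
          (-1 : ℚ) ^ (m + 1) * h m / (((d : ℚ) + 2) * ((d + 1).choose m : ℚ)) :=
  tau_alternating_sum_hvector_general d K hdim h hh
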